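/- arXiv:math/0102195 — 6 statements merged into one kernel-verified Lean document; each statement's English description precedes it below -/
import Mathlib

section
/- Let A be the algebra of the quantum Euclidean sphere S²_q with generators x₀ = x₀*, x₁, x₁* satisfying x₀x₁ = q x₁x₀, x₁*x₀ = q x₀x₁*, [x₁, x₁*] = (1-q⁻¹)x₀², and q x₀² + (1+q)x₁*x₁ = r²·1 (r > 0). Then the 2×2 matrix e = (1/2)[[1 + q^{-1/2} r⁻¹ x₀, (1+q)^{1/2} r⁻¹ x₁], [(1+q)^{1/2} r⁻¹ x₁*, 1 - q^{1/2} r⁻¹ x₀]] satisfies e² = e and e* = e. -/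
set_option maxHeartbeats 1000000


/-- The monopole projection on the quantum Euclidean sphere S²_q:
given the defining relations of S²_q with radius r, the 2×2 matrix e is a
self-adjoint idempotent. -/
theorem stmt1 (A : Type*) [Ring A] [StarRing A] [Algebra ℂ A] [StarModule ℂ A]
    (q r : ℝ) (hq : 0 < q) (hr : 0 < r) (x0 x1 : A)
    (hx0 : star x0 = x0)
    (h1 : x0 * x1 = (q : ℂ) • (x1 * x0))
    (h2 : star x1 * x0 = (q : ℂ) • (x0 * star x1))
    (h3 : x1 * star x1 - star x1 * x1 = ((1 - q⁻¹ : ℝ) : ℂ) • (x0 ^ 2))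
    (hrad : (q : ℂ) • (x0 ^ 2) + ((1 + q : ℝ) : ℂ) • (star x1 * x1)
      = algebraMap ℂ A ((r : ℂ) ^ 2)) :
    let e : Matrix (Fin 2) (Fin 2) A :=
      (1 / 2 : ℂ) •
        !![1 + (((Real.sqrt q)⁻¹ * r⁻¹ : ℝ) : ℂ) • x0,
             ((Real.sqrt (1 + q) * r⁻¹ : ℝ) : ℂ) • x1;
           ((Real.sqrt (1 + q) * r⁻¹ : ℝ) : ℂ) • star x1,
             1 - ((Real.sqrt q * r⁻¹ : ℝ) : ℂ) • x0]
    e * e = e ∧ star e = e := by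
  intro e
  have hq1 : ((1 + q : ℝ) : ℂ) ≠ 0 := by
    exact_mod_cast (by positivity : (1+q:ℝ) ≠ 0)
  have hs0 : ((Real.sqrt q : ℝ) : ℂ) ≠ 0 := by
    exact_mod_cast (by positivity : Real.sqrt q ≠ 0)
  have ht0 : ((Real.sqrt (1+q) : ℝ) : ℂ) ≠ 0 := by
    exact_mod_cast (by positivity : Real.sqrt (1+q) ≠ 0)
  have hrc : ((r : ℝ) : ℂ) ≠ 0 := by exact_mod_cast hr.ne'
  have hqc : ((q : ℝ) : ℂ) ≠ 0 := by exact_mod_cast hq.ne'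
  have h1qc : 1 + ((q : ℝ) : ℂ) ≠ 0 := by push_cast at hq1; exact hq1
  have hs2 : ((Real.sqrt q : ℝ) : ℂ)^2 = (q : ℂ) := by
    exact_mod_cast congrArg (fun x : ℝ => (x : ℂ)) (Real.sq_sqrt hq.le)
  have ht2 : ((Real.sqrt (1+q) : ℝ) : ℂ)^2 = 1 + (q : ℂ) := by
    have : Real.sqrt (1+q) ^ 2 = 1 + q := Real.sq_sqrt (by positivity)
    exact_mod_cast congrArg (fun x : ℝ => (x : ℂ)) this
  have hK1 : x1 * star x1 = star x1 * x1 + ((1 - q⁻¹ : ℝ) : ℂ) • (x0 * x0) := by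
    rw [pow_two] at h3
    exact sub_eq_iff_eq_add'.mp h3
  have hK2 : star x1 * x1
      = ((1 + q : ℝ) : ℂ)⁻¹ • ((r : ℂ)^2 • (1 : A) - (q : ℂ) • (x0 * x0)) := by
    rw [pow_two, Algebra.algebraMap_eq_smul_one] at hrad
    rw [eq_inv_smul_iff₀ hq1, ← hrad]
    module
  have hts : ((Real.sqrt (1+q) : ℝ) : ℂ)^2 = 1 + ((Real.sqrt q : ℝ) : ℂ)^2 := by
    rw [hs2]; exact ht2
  have h1s : (1:ℂ) + ((Real.sqrt q : ℝ) : ℂ)^2 ≠ 0 := by rw [hs2]; exact h1qc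
  have hA : ((1:ℂ) + ((Real.sqrt q : ℝ) : ℂ)^2) * ((1:ℂ) + ((Real.sqrt q : ℝ) : ℂ)^2)⁻¹ = 1 :=
    mul_inv_cancel₀ h1s
  have hB : (((Real.sqrt q : ℝ) : ℂ)^2) * (((Real.sqrt q : ℝ) : ℂ)^2)⁻¹ = 1 :=
    mul_inv_cancel₀ (pow_ne_zero 2 hs0)
  have hC : ((r : ℂ)^4) * ((r : ℂ)^4)⁻¹ = 1 :=
    mul_inv_cancel₀ (pow_ne_zero 4 hrc)
  constructor
  · ext i j
    fin_cases i <;> fin_cases j <;>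
      simp [e, Matrix.mul_apply, Fin.sum_univ_two, mul_add, add_mul, mul_sub, sub_mul,
        smul_mul_assoc, mul_smul_comm, smul_smul, smul_add, smul_sub]
    · rw [hK1, hK2]; simp only [smul_add, smul_sub, smul_smul]; match_scalars
      all_goals (try push_cast; try rw [← hs2]; try rw [← hts]; try field_simp; try ring)
      all_goals (first | ring1 | skip)
      all_goals try simp only [inv_pow]
      all_goals try rw [show ((Real.sqrt (1+q) : ℝ) : ℂ)^4 = (((Real.sqrt (1+q) : ℝ) : ℂ)^2)^2 from by ring]
      all_goals try rw [show ((Real.sqrt q : ℝ) : ℂ)^6 = (((Real.sqrt q : ℝ) : ℂ)^2)^3 from by ring]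
      all_goals try rw [show ((Real.sqrt q : ℝ) : ℂ)^4 = (((Real.sqrt q : ℝ) : ℂ)^2)^2 from by ring]
      all_goals try rw [hts]
      all_goals try linear_combination (-((((Real.sqrt q : ℝ) : ℂ)^2) * (((Real.sqrt q : ℝ) : ℂ)^2)⁻¹ * (((r : ℂ)^4) * ((r : ℂ)^4)⁻¹))) * hA + (-(((r : ℂ)^4) * ((r : ℂ)^4)⁻¹)) * hB + (-1 : ℂ) * hC
      all_goals try field_simp
      all_goals try ring
    · rw [h1]; match_scalars
      all_goals (try push_cast; try rw [← hs2]; try rw [← hts]; try field_simp; try ring)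
      all_goals (first | ring1 | skip)
      all_goals try simp only [inv_pow]
      all_goals try rw [show ((Real.sqrt (1+q) : ℝ) : ℂ)^4 = (((Real.sqrt (1+q) : ℝ) : ℂ)^2)^2 from by ring]
      all_goals try rw [show ((Real.sqrt q : ℝ) : ℂ)^6 = (((Real.sqrt q : ℝ) : ℂ)^2)^3 from by ring]
      all_goals try rw [show ((Real.sqrt q : ℝ) : ℂ)^4 = (((Real.sqrt q : ℝ) : ℂ)^2)^2 from by ring]
      all_goals try rw [hts]
      all_goals try linear_combination (-((((Real.sqrt q : ℝ) : ℂ)^2) * (((Real.sqrt q : ℝ) : ℂ)^2)⁻¹ * (((r : ℂ)^4) * ((r : ℂ)^4)⁻¹))) * hA + (-(((r : ℂ)^4) * ((r : ℂ)^4)⁻¹)) * hB + (-1 : ℂ) * hC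
      all_goals try field_simp
      all_goals try ring
    · rw [h2]; match_scalars
      all_goals (try push_cast; try rw [← hs2]; try rw [← hts]; try field_simp; try ring)
      all_goals (first | ring1 | skip)
      all_goals try simp only [inv_pow]
      all_goals try rw [show ((Real.sqrt (1+q) : ℝ) : ℂ)^4 = (((Real.sqrt (1+q) : ℝ) : ℂ)^2)^2 from by ring]
      all_goals try rw [show ((Real.sqrt q : ℝ) : ℂ)^6 = (((Real.sqrt q : ℝ) : ℂ)^2)^3 from by ring]
      all_goals try rw [show ((Real.sqrt q : ℝ) : ℂ)^4 = (((Real.sqrt q : ℝ) : ℂ)^2)^2 from by ring]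
      all_goals try rw [hts]
      all_goals try linear_combination (-((((Real.sqrt q : ℝ) : ℂ)^2) * (((Real.sqrt q : ℝ) : ℂ)^2)⁻¹ * (((r : ℂ)^4) * ((r : ℂ)^4)⁻¹))) * hA + (-(((r : ℂ)^4) * ((r : ℂ)^4)⁻¹)) * hB + (-1 : ℂ) * hC
      all_goals try field_simp
      all_goals try ring
    · rw [hK2]; simp only [smul_add, smul_sub, smul_smul]; match_scalars
      all_goals (try push_cast; try rw [← hs2]; try rw [← hts]; try field_simp; try ring)
      all_goals (first | ring1 | skip)
      all_goals try simp only [inv_pow]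
      all_goals try rw [show ((Real.sqrt (1+q) : ℝ) : ℂ)^4 = (((Real.sqrt (1+q) : ℝ) : ℂ)^2)^2 from by ring]
      all_goals try rw [show ((Real.sqrt q : ℝ) : ℂ)^6 = (((Real.sqrt q : ℝ) : ℂ)^2)^3 from by ring]
      all_goals try rw [show ((Real.sqrt q : ℝ) : ℂ)^4 = (((Real.sqrt q : ℝ) : ℂ)^2)^2 from by ring]
      all_goals try rw [hts]
      all_goals try linear_combination (-((((Real.sqrt q : ℝ) : ℂ)^2) * (((Real.sqrt q : ℝ) : ℂ)^2)⁻¹ * (((r : ℂ)^4) * ((r : ℂ)^4)⁻¹))) * hA + (-(((r : ℂ)^4) * ((r : ℂ)^4)⁻¹)) * hB + (-1 : ℂ) * hC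
      all_goals try field_simp
      all_goals try ring
  · ext i j
    fin_cases i <;> fin_cases j <;>
      simp [e, Matrix.star_apply, star_add, star_sub, star_smul, hx0, star_star,
        Complex.conj_ofReal, Matrix.conjTranspose_apply]
end

section
/- With the setup of the S²_q projection e = (1/2)[[1 + q^{-1/2} r⁻¹ x₀, (1+q)^{1/2} r⁻¹ x₁], [(1+q)^{1/2} r⁻¹ x₁*, 1 - q^{1/2} r⁻¹ x₀]] on a *-algebra A generated by x₀, x₁, x₁*, the condition e² = e implies all three defining relations of S²_q: x₀x₁ = q x₁x₀, [x₁, x₁*] = (1-q⁻¹)x₀², and q x₀² + (1+q)x₁*x₁ = r²·1. -/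
/-!
With `M = [[q^{-1/2} x₀, (1+q)^{1/2} x₁], [(1+q)^{1/2} x₁*, -q^{1/2} x₀]]` the projection is
`e = ½ (1 + r⁻¹ M)`, so `e² = e` says exactly `M² = r²`. The upper right entry of `M²` is a
nonzero multiple of `x₀x₁ - q x₁x₀`, the lower right one is `q x₀² + (1+q) x₁*x₁`, and the
difference of the two diagonal entries is `(1+q) ([x₁, x₁*] - (1 - q⁻¹) x₀²)`.
-/

section

variable {K R : Type*} [Field K] [Ring R] [Algebra K R]

theorem isIdempotentElem_half_smul_one_add_iff [CharZero K] (X : R) :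
    IsIdempotentElem ((1 / 2 : K) • (1 + X)) ↔ X * X = 1 := by
  rw [IsIdempotentElem, smul_mul_smul_comm, add_mul, mul_add, mul_add, one_mul, mul_one, one_mul]
  constructor
  · intro h
    linear_combination (norm := module) (4 : K) • h
  · intro h
    linear_combination (norm := module) (1 / 4 : K) • h

theorem inv_smul_mul_self_eq_one_iff {c : K} (hc : c ≠ 0) (X : R) :
    (c⁻¹ • X) * (c⁻¹ • X) = 1 ↔ X * X = c ^ 2 • 1 := by
  rw [smul_mul_smul_comm, ← sq, inv_pow, ← eq_inv_smul_iff₀ (by simpa using hc), inv_inv]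

def monopoleMatrix (s t : K) (x y z : R) : Matrix (Fin 2) (Fin 2) R :=
  !![s⁻¹ • x, t • y; t • z, -(s • x)]

variable {q s t : K}

theorem monopoleMatrix_mul_self (hs : s ^ 2 = q) (ht : t ^ 2 = 1 + q) (hs0 : s ≠ 0)
    (x y z : R) :
    monopoleMatrix s t x y z * monopoleMatrix s t x y z =
      !![q⁻¹ • x ^ 2 + (1 + q) • (y * z), (t * s⁻¹) • (x * y - q • (y * x));
        (t * s⁻¹) • (z * x - q • (x * z)), (1 + q) • (z * y) + q • x ^ 2] := by
  rw [monopoleMatrix, Matrix.mul_fin_two, ← ht, ← hs]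
  congr 1
  simp only [Matrix.vecCons_inj, and_true, smul_mul_smul_comm, mul_neg, neg_mul, neg_neg, pow_two]
  refine ⟨⟨?_, ?_⟩, ?_⟩ <;> match_scalars <;> field_simp

theorem relations_of_monopoleMatrix_mul_self {ρ : K} (hs : s ^ 2 = q) (ht : t ^ 2 = 1 + q)
    (hs0 : s ≠ 0) (ht0 : t ≠ 0) {x y z : R}
    (h : monopoleMatrix s t x y z * monopoleMatrix s t x y z = ρ • 1) :
    x * y = q • (y * x) ∧ y * z - z * y = (1 - q⁻¹) • x ^ 2 ∧
      q • x ^ 2 + (1 + q) • (z * y) = algebraMap K R ρ := by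
  have hq : q ≠ 0 := hs ▸ pow_ne_zero 2 hs0
  have h1q : 1 + q ≠ 0 := ht ▸ pow_ne_zero 2 ht0
  rw [monopoleMatrix_mul_self hs ht hs0] at h
  have h00 := congrFun (congrFun h 0) 0
  have h01 := congrFun (congrFun h 0) 1
  have h11 := congrFun (congrFun h 1) 1
  simp only [Fin.isValue, Matrix.of_apply, Matrix.cons_val', Matrix.cons_val_zero,
    Matrix.cons_val_fin_one, Matrix.smul_apply, Matrix.one_apply_eq, Matrix.cons_val_one,
    ne_eq, zero_ne_one, not_false_eq_true, Matrix.one_apply_ne, smul_zero, smul_eq_zero,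
    mul_eq_zero, inv_eq_zero] at h00 h01 h11
  refine ⟨?_, ?_, ?_⟩
  · simpa only [ht0, hs0, or_self, sub_eq_zero, false_or] using h01
  · apply smul_right_injective R h1q
    linear_combination (norm := skip) h00 - h11
    match_scalars <;> field_simp <;> ring
  · rw [Algebra.algebraMap_eq_smul_one]
    linear_combination (norm := module) h11

end

theorem stmt2_general (A : Type*) [Ring A] [StarRing A] [Algebra ℂ A]
    (q r : ℝ) (hq : 0 < q) (hr : 0 < r) (x0 x1 : A)
    (e : Matrix (Fin 2) (Fin 2) A)
    (he : e =
      (1 / 2 : ℂ) •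
        !![1 + (((Real.sqrt q)⁻¹ * r⁻¹ : ℝ) : ℂ) • x0,
             ((Real.sqrt (1 + q) * r⁻¹ : ℝ) : ℂ) • x1;
           ((Real.sqrt (1 + q) * r⁻¹ : ℝ) : ℂ) • star x1,
             1 - ((Real.sqrt q * r⁻¹ : ℝ) : ℂ) • x0])
    (hidem : e * e = e) :
    x0 * x1 = (q : ℂ) • (x1 * x0) ∧
    x1 * star x1 - star x1 * x1 = ((1 - q⁻¹ : ℝ) : ℂ) • (x0 ^ 2) ∧
    (q : ℂ) • (x0 ^ 2) + ((1 + q : ℝ) : ℂ) • (star x1 * x1)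
      = algebraMap ℂ A ((r : ℂ) ^ 2) := by
  have hs : ((Real.sqrt q : ℝ) : ℂ) ^ 2 = q := by exact_mod_cast Real.sq_sqrt hq.le
  have ht : ((Real.sqrt (1 + q) : ℝ) : ℂ) ^ 2 = 1 + q := by
    exact_mod_cast Real.sq_sqrt (by positivity)
  have hs0 : ((Real.sqrt q : ℝ) : ℂ) ≠ 0 := by exact_mod_cast (Real.sqrt_pos.2 hq).ne'
  have ht0 : ((Real.sqrt (1 + q) : ℝ) : ℂ) ≠ 0 := by
    exact_mod_cast (Real.sqrt_pos.2 (by positivity : (0 : ℝ) < 1 + q)).ne'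
  have hr0 : (r : ℂ) ≠ 0 := by exact_mod_cast hr.ne'
  have he_monopole : e = (1 / 2 : ℂ) • (1 + (r : ℂ)⁻¹ •
      monopoleMatrix (Real.sqrt q : ℂ) (Real.sqrt (1 + q) : ℂ) x0 x1 (star x1)) := by
    rw [he]
    congr 1
    rw [monopoleMatrix, Matrix.one_fin_two, Matrix.smul_of, Matrix.of_add_of]
    congr 1
    simp only [Matrix.smul_cons, Matrix.smul_empty, Matrix.cons_add_cons, Matrix.empty_add_empty,
      Matrix.vecCons_inj, and_true]
    push_cast
    refine ⟨⟨?_, ?_⟩, ?_, ?_⟩ <;> module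
  change IsIdempotentElem e at hidem
  rw [he_monopole, isIdempotentElem_half_smul_one_add_iff,
    inv_smul_mul_self_eq_one_iff hr0] at hidem
  obtain ⟨h01, hcomm, hsphere⟩ := relations_of_monopoleMatrix_mul_self hs ht hs0 ht0 hidem
  exact ⟨h01, by exact_mod_cast hcomm, by exact_mod_cast hsphere⟩

/-- Conversely, idempotency of the monopole matrix e implies all
three defining relations of S²_q. -/
theorem stmt2 (A : Type*) [Ring A] [StarRing A] [Algebra ℂ A] [StarModule ℂ A]
    (q r : ℝ) (hq : 0 < q) (hq1 : q ≠ 1) (hr : 0 < r) (x0 x1 : A)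
    (hx0 : star x0 = x0)
    (e : Matrix (Fin 2) (Fin 2) A)
    (he : e =
      (1 / 2 : ℂ) •
        !![1 + (((Real.sqrt q)⁻¹ * r⁻¹ : ℝ) : ℂ) • x0,
             ((Real.sqrt (1 + q) * r⁻¹ : ℝ) : ℂ) • x1;
           ((Real.sqrt (1 + q) * r⁻¹ : ℝ) : ℂ) • star x1,
             1 - ((Real.sqrt q * r⁻¹ : ℝ) : ℂ) • x0])
    (hidem : e * e = e) :
    x0 * x1 = (q : ℂ) • (x1 * x0) ∧
    x1 * star x1 - star x1 * x1 = ((1 - q⁻¹ : ℝ) : ℂ) • (x0 ^ 2) ∧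
    (q : ℂ) • (x0 ^ 2) + ((1 + q : ℝ) : ℂ) • (star x1 * x1)
      = algebraMap ℂ A ((r : ℂ) ^ 2) :=
  stmt2_general A q r hq hr x0 x1 e he hidem
end

section
/- Let A be the algebra of S⁴_q with generators x₀ = x₀*, x₁, x₂ satisfying xᵢxⱼ = q xⱼxᵢ for i<j, xᵢ*xⱼ = q xⱼxᵢ* for i≠j, [x₁,x₁*] = (1-q⁻¹)x₀², [x₂,x₂*] = q⁻¹(1-q⁻¹)(q x₀² + (1+q)x₁*x₁), and the radius relation (1+q)x₂*x₂ + (1+q)x₁*x₁ + q x₀² = 1. Then the 4×4 matrix e given by e = (1/2)·[[1 + q^{-3/2}x₀, q⁻¹(1+q)^{1/2}x₁, (1+q)^{1/2}x₂, 0],[q⁻¹(1+q)^{1/2}x₁*, 1 - q^{-1/2}x₀, 0, (1+q)^{1/2}x₂],[(1+q)^{1/2}x₂*, 0, 1 - q^{-1/2}x₀, -(1+q)^{1/2}x₁],[0, (1+q)^{1/2}x₂*, -(1+q)^{1/2}x₁*, 1 + q^{1/2}x₀]] satisfies e² = e and e* = e. -/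
theorem mul_fin_four'' {α : Type*} [AddCommMonoid α] [Mul α]
    (a₁₁ a₁₂ a₁₃ a₁₄ a₂₁ a₂₂ a₂₃ a₂₄ a₃₁ a₃₂ a₃₃ a₃₄ a₄₁ a₄₂ a₄₃ a₄₄
     b₁₁ b₁₂ b₁₃ b₁₄ b₂₁ b₂₂ b₂₃ b₂₄ b₃₁ b₃₂ b₃₃ b₃₄ b₄₁ b₄₂ b₄₃ b₄₄ : α) :
    !![a₁₁, a₁₂, a₁₃, a₁₄; a₂₁, a₂₂, a₂₃, a₂₄; a₃₁, a₃₂, a₃₃, a₃₄; a₄₁, a₄₂, a₄₃, a₄₄] *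
    !![b₁₁, b₁₂, b₁₃, b₁₄; b₂₁, b₂₂, b₂₃, b₂₄; b₃₁, b₃₂, b₃₃, b₃₄; b₄₁, b₄₂, b₄₃, b₄₄] =
    !![a₁₁*b₁₁ + a₁₂*b₂₁ + a₁₃*b₃₁ + a₁₄*b₄₁, a₁₁*b₁₂ + a₁₂*b₂₂ + a₁₃*b₃₂ + a₁₄*b₄₂,
       a₁₁*b₁₃ + a₁₂*b₂₃ + a₁₃*b₃₃ + a₁₄*b₄₃, a₁₁*b₁₄ + a₁₂*b₂₄ + a₁₃*b₃₄ + a₁₄*b₄₄;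
       a₂₁*b₁₁ + a₂₂*b₂₁ + a₂₃*b₃₁ + a₂₄*b₄₁, a₂₁*b₁₂ + a₂₂*b₂₂ + a₂₃*b₃₂ + a₂₄*b₄₂,
       a₂₁*b₁₃ + a₂₂*b₂₃ + a₂₃*b₃₃ + a₂₄*b₄₃, a₂₁*b₁₄ + a₂₂*b₂₄ + a₂₃*b₃₄ + a₂₄*b₄₄;
       a₃₁*b₁₁ + a₃₂*b₂₁ + a₃₃*b₃₁ + a₃₄*b₄₁, a₃₁*b₁₂ + a₃₂*b₂₂ + a₃₃*b₃₂ + a₃₄*b₄₂,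
       a₃₁*b₁₃ + a₃₂*b₂₃ + a₃₃*b₃₃ + a₃₄*b₄₃, a₃₁*b₁₄ + a₃₂*b₂₄ + a₃₃*b₃₄ + a₃₄*b₄₄;
       a₄₁*b₁₁ + a₄₂*b₂₁ + a₄₃*b₃₁ + a₄₄*b₄₁, a₄₁*b₁₂ + a₄₂*b₂₂ + a₄₃*b₃₂ + a₄₄*b₄₂,
       a₄₁*b₁₃ + a₄₂*b₂₃ + a₄₃*b₃₃ + a₄₄*b₄₃, a₄₁*b₁₄ + a₄₂*b₂₄ + a₄₃*b₃₄ + a₄₄*b₄₄] := by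
  ext i j
  fin_cases i <;> fin_cases j
    <;> simp [Matrix.mul_apply, dotProduct, Fin.sum_univ_succ, ← add_assoc]



set_option maxHeartbeats 4000000 in
/-- The instanton projection on the quantum Euclidean sphere
S⁴_q (radius normalized so that (1+q)x₂*x₂+(1+q)x₁*x₁+qx₀² = 1): the 4×4
matrix e is a self-adjoint idempotent. -/
theorem stmt5 (A : Type*) [Ring A] [StarRing A] [Algebra ℂ A] [StarModule ℂ A]
    (q : ℝ) (hq : 0 < q) (x0 x1 x2 : A)
    (hx0 : star x0 = x0)
    -- xᵢxⱼ = q xⱼxᵢ for i < j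
    (h01 : x0 * x1 = (q : ℂ) • (x1 * x0))
    (h02 : x0 * x2 = (q : ℂ) • (x2 * x0))
    (h12 : x1 * x2 = (q : ℂ) • (x2 * x1))
    -- xᵢ*xⱼ = q xⱼxᵢ* for i ≠ j
    (h10s : star x1 * x0 = (q : ℂ) • (x0 * star x1))
    (h20s : star x2 * x0 = (q : ℂ) • (x0 * star x2))
    (h12s : star x1 * x2 = (q : ℂ) • (x2 * star x1))
    (h21s : star x2 * x1 = (q : ℂ) • (x1 * star x2))
    -- [x₁,x₁*] = (1-q⁻¹)x₀²
    (hc1 : x1 * star x1 - star x1 * x1 = ((1 - q⁻¹ : ℝ) : ℂ) • (x0 ^ 2))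
    -- [x₂,x₂*] = q⁻¹(1-q⁻¹)(q x₀² + (1+q)x₁*x₁)
    (hc2 : x2 * star x2 - star x2 * x2
      = ((q⁻¹ * (1 - q⁻¹) : ℝ) : ℂ) •
          ((q : ℂ) • (x0 ^ 2) + ((1 + q : ℝ) : ℂ) • (star x1 * x1)))
    -- radius relation: (1+q)x₂*x₂ + (1+q)x₁*x₁ + q x₀² = 1
    (hrad : ((1 + q : ℝ) : ℂ) • (star x2 * x2) + ((1 + q : ℝ) : ℂ) • (star x1 * x1)
      + (q : ℂ) • (x0 ^ 2) = 1) :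
    let e : Matrix (Fin 4) (Fin 4) A :=
      (1 / 2 : ℂ) •
        !![1 + (((Real.sqrt q)⁻¹ * q⁻¹ : ℝ) : ℂ) • x0,
             ((q⁻¹ * Real.sqrt (1 + q) : ℝ) : ℂ) • x1,
             ((Real.sqrt (1 + q) : ℝ) : ℂ) • x2, 0;
           ((q⁻¹ * Real.sqrt (1 + q) : ℝ) : ℂ) • star x1,
             1 - (((Real.sqrt q)⁻¹ : ℝ) : ℂ) • x0, 0,
             ((Real.sqrt (1 + q) : ℝ) : ℂ) • x2;
           ((Real.sqrt (1 + q) : ℝ) : ℂ) • star x2, 0,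
             1 - (((Real.sqrt q)⁻¹ : ℝ) : ℂ) • x0,
             -(((Real.sqrt (1 + q) : ℝ) : ℂ) • x1);
           0, ((Real.sqrt (1 + q) : ℝ) : ℂ) • star x2,
             -(((Real.sqrt (1 + q) : ℝ) : ℂ) • star x1),
             1 + ((Real.sqrt q : ℝ) : ℂ) • x0]
    e * e = e ∧ star e = e := by

  have hq0 : (q:ℂ) ≠ 0 := by exact_mod_cast hq.ne'
  have hu : ((Real.sqrt q : ℝ) : ℂ) ^ 2 = (q : ℂ) := by
    norm_cast; exact Real.sq_sqrt hq.le
  have hv : ((Real.sqrt (1 + q) : ℝ) : ℂ) ^ 2 = 1 + (q : ℂ) := by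
    rw [← Complex.ofReal_pow, Real.sq_sqrt (by positivity : (0:ℝ) ≤ 1 + q)]; push_cast; ring
  have hu0 : ((Real.sqrt q : ℝ) : ℂ) ≠ 0 := by
    intro h
    rw [← hu, h] at hq0; simp at hq0
  have hc1' := eq_add_of_sub_eq hc1
  have hc2' := eq_add_of_sub_eq hc2
  have hx00 : x0 * x0 = x0 ^ 2 := (sq x0).symm
  have hss : star x2 * star x1 = (q : ℂ) • (star x1 * star x2) := by
    have h := congrArg star h12
    simpa [star_mul, star_smul, Complex.star_def, Complex.conj_ofReal] using h
  intro e
  have he : e = (1 / 2 : ℂ) •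
      !![1 + (((Real.sqrt q)⁻¹ * q⁻¹ : ℝ) : ℂ) • x0,
             ((q⁻¹ * Real.sqrt (1 + q) : ℝ) : ℂ) • x1,
             ((Real.sqrt (1 + q) : ℝ) : ℂ) • x2, 0;
           ((q⁻¹ * Real.sqrt (1 + q) : ℝ) : ℂ) • star x1,
             1 - (((Real.sqrt q)⁻¹ : ℝ) : ℂ) • x0, 0,
             ((Real.sqrt (1 + q) : ℝ) : ℂ) • x2;
           ((Real.sqrt (1 + q) : ℝ) : ℂ) • star x2, 0,
             1 - (((Real.sqrt q)⁻¹ : ℝ) : ℂ) • x0,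
             -(((Real.sqrt (1 + q) : ℝ) : ℂ) • x1);
           0, ((Real.sqrt (1 + q) : ℝ) : ℂ) • star x2,
             -(((Real.sqrt (1 + q) : ℝ) : ℂ) • star x1),
             1 + ((Real.sqrt q : ℝ) : ℂ) • x0] := rfl
  have key : (!![1 + (((Real.sqrt q)⁻¹ * q⁻¹ : ℝ) : ℂ) • x0,
             ((q⁻¹ * Real.sqrt (1 + q) : ℝ) : ℂ) • x1,
             ((Real.sqrt (1 + q) : ℝ) : ℂ) • x2, 0;
           ((q⁻¹ * Real.sqrt (1 + q) : ℝ) : ℂ) • star x1,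
             1 - (((Real.sqrt q)⁻¹ : ℝ) : ℂ) • x0, 0,
             ((Real.sqrt (1 + q) : ℝ) : ℂ) • x2;
           ((Real.sqrt (1 + q) : ℝ) : ℂ) • star x2, 0,
             1 - (((Real.sqrt q)⁻¹ : ℝ) : ℂ) • x0,
             -(((Real.sqrt (1 + q) : ℝ) : ℂ) • x1);
           0, ((Real.sqrt (1 + q) : ℝ) : ℂ) • star x2,
             -(((Real.sqrt (1 + q) : ℝ) : ℂ) • star x1),
             1 + ((Real.sqrt q : ℝ) : ℂ) • x0] : Matrix (Fin 4) (Fin 4) A) * !![1 + (((Real.sqrt q)⁻¹ * q⁻¹ : ℝ) : ℂ) • x0,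
             ((q⁻¹ * Real.sqrt (1 + q) : ℝ) : ℂ) • x1,
             ((Real.sqrt (1 + q) : ℝ) : ℂ) • x2, 0;
           ((q⁻¹ * Real.sqrt (1 + q) : ℝ) : ℂ) • star x1,
             1 - (((Real.sqrt q)⁻¹ : ℝ) : ℂ) • x0, 0,
             ((Real.sqrt (1 + q) : ℝ) : ℂ) • x2;
           ((Real.sqrt (1 + q) : ℝ) : ℂ) • star x2, 0,
             1 - (((Real.sqrt q)⁻¹ : ℝ) : ℂ) • x0,
             -(((Real.sqrt (1 + q) : ℝ) : ℂ) • x1);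
           0, ((Real.sqrt (1 + q) : ℝ) : ℂ) • star x2,
             -(((Real.sqrt (1 + q) : ℝ) : ℂ) • star x1),
             1 + ((Real.sqrt q : ℝ) : ℂ) • x0] = (2 : ℂ) • !![1 + (((Real.sqrt q)⁻¹ * q⁻¹ : ℝ) : ℂ) • x0,
             ((q⁻¹ * Real.sqrt (1 + q) : ℝ) : ℂ) • x1,
             ((Real.sqrt (1 + q) : ℝ) : ℂ) • x2, 0;
           ((q⁻¹ * Real.sqrt (1 + q) : ℝ) : ℂ) • star x1,
             1 - (((Real.sqrt q)⁻¹ : ℝ) : ℂ) • x0, 0,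
             ((Real.sqrt (1 + q) : ℝ) : ℂ) • x2;
           ((Real.sqrt (1 + q) : ℝ) : ℂ) • star x2, 0,
             1 - (((Real.sqrt q)⁻¹ : ℝ) : ℂ) • x0,
             -(((Real.sqrt (1 + q) : ℝ) : ℂ) • x1);
           0, ((Real.sqrt (1 + q) : ℝ) : ℂ) • star x2,
             -(((Real.sqrt (1 + q) : ℝ) : ℂ) • star x1),
             1 + ((Real.sqrt q : ℝ) : ℂ) • x0] := by
    rw [mul_fin_four'']
    ext i j
    fin_cases i <;> fin_cases j <;>
      simp only [Matrix.smul_apply, Matrix.cons_val', Matrix.cons_val_zero, Matrix.cons_val_one,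
        Matrix.head_cons, Matrix.empty_val', Matrix.cons_val_fin_one, Matrix.head_fin_const,
        Matrix.cons_val_two, Matrix.cons_val_three, Matrix.tail_cons, Matrix.of_apply,
        Fin.isValue, Fin.mk_zero, Fin.mk_one, Matrix.cons_val_succ', Matrix.cons_val_succ] <;>
      simp only [smul_mul_assoc, mul_smul_comm, smul_smul, mul_add, add_mul, mul_sub, sub_mul,
        mul_one, one_mul, mul_zero, zero_mul, mul_neg, neg_mul, zero_add, add_zero, smul_zero,
        smul_neg, neg_neg, smul_add, smul_sub, neg_smul] <;>
      simp only [hx00, h01, h02, h12, h10s, h20s, h12s, h21s, hss, hc1', hc2',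
        smul_smul, smul_add, smul_sub, smul_neg] <;>
      try simp only [← hrad]
    all_goals match_scalars
    all_goals push_cast
    all_goals try ring_nf
    all_goals try simp only [inv_pow, hu, hv]
    all_goals try field_simp
    all_goals try ring_nf
    all_goals try ring
    all_goals try simp only [inv_pow, hu, hv]
    all_goals try field_simp
    all_goals try ring
  refine ⟨?_, ?_⟩
  · rw [he, Matrix.smul_mul, Matrix.mul_smul, key, smul_smul, smul_smul]
    norm_num
  · clear key he
    ext i j
    simp only [Matrix.star_apply, Matrix.smul_apply]
    fin_cases i <;> fin_cases j <;>
      simp [e, star_smul, Complex.star_def, Complex.conj_ofReal, hx0, star_star,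
        Matrix.cons_val', Matrix.cons_val_zero, Matrix.cons_val_one, Matrix.head_cons,
        Matrix.empty_val', Matrix.cons_val_fin_one, Matrix.head_fin_const]
end

section
/- The matrix trace of the S⁴_q instanton projection equals 2 + (1/2)q^{-3/2}(1-q)² x₀, and composing with any character τ_λ (which vanishes on x₀) gives rank(e) = (τ_λ ∘ Tr)(e) = 2. -/
private lemma stmt7_aux (A : Type*) [Ring A] [Algebra ℂ A] (x0 : A) (a b c d : ℂ)
    (h : (1/2:ℂ)*a - 1/2*b - 1/2*b + 1/2*c = d) :
    (1/2:ℂ) • (1 + a • x0) + (1/2:ℂ) • (1 - b • x0) + (1/2:ℂ) • (1 - b • x0)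
      + (1/2:ℂ) • (1 + c • x0) = 2 + d • x0 := by
  rw [show (2:A) = (1:A) + 1 from one_add_one_eq_two.symm]
  match_scalars
  · norm_num
  · linear_combination h

/-- The matrix trace of the S⁴_q instanton projection equals
2 + (1/2)q^{-3/2}(1-q)² x₀, and composing with any character τ_λ that
vanishes on x₀ (and x₁, x₁*) gives rank(e) = (τ_λ ∘ Tr)(e) = 2. -/
theorem stmt7 (A : Type*) [Ring A] [StarRing A] [Algebra ℂ A] [StarModule ℂ A]
    (q : ℝ) (hq : 0 < q) (x0 x1 x2 : A)
    (hx0 : star x0 = x0)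
    (τ : A →ₐ[ℂ] ℂ)
    (hτ0 : τ x0 = 0) (hτ1 : τ x1 = 0) (hτ1s : τ (star x1) = 0)
    (e : Matrix (Fin 4) (Fin 4) A)
    (he : e =
      (1 / 2 : ℂ) •
        !![1 + (((Real.sqrt q)⁻¹ * q⁻¹ : ℝ) : ℂ) • x0,
             ((q⁻¹ * Real.sqrt (1 + q) : ℝ) : ℂ) • x1,
             ((Real.sqrt (1 + q) : ℝ) : ℂ) • x2, 0;
           ((q⁻¹ * Real.sqrt (1 + q) : ℝ) : ℂ) • star x1,
             1 - (((Real.sqrt q)⁻¹ : ℝ) : ℂ) • x0, 0,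
             ((Real.sqrt (1 + q) : ℝ) : ℂ) • x2;
           ((Real.sqrt (1 + q) : ℝ) : ℂ) • star x2, 0,
             1 - (((Real.sqrt q)⁻¹ : ℝ) : ℂ) • x0,
             -(((Real.sqrt (1 + q) : ℝ) : ℂ) • x1);
           0, ((Real.sqrt (1 + q) : ℝ) : ℂ) • star x2,
             -(((Real.sqrt (1 + q) : ℝ) : ℂ) • star x1),
             1 + ((Real.sqrt q : ℝ) : ℂ) • x0]) :
    e.trace = 2 + (((1 / 2) * (Real.sqrt q)⁻¹ * q⁻¹ * (1 - q) ^ 2 : ℝ) : ℂ) • x0 ∧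
    τ e.trace = 2 := by
  have hs : Real.sqrt q * Real.sqrt q = q := Real.mul_self_sqrt hq.le
  have hs0 : Real.sqrt q ≠ 0 := by positivity
  have hq0 : q ≠ 0 := hq.ne'
  have hinv : (Real.sqrt q)⁻¹ = Real.sqrt q / q := by
    rw [eq_div_iff hq0, inv_mul_eq_iff_eq_mul₀ hs0, hs]
  have hreal : (1/2 : ℝ) * ((Real.sqrt q)⁻¹ * q⁻¹) - 1/2 * (Real.sqrt q)⁻¹
      - 1/2 * (Real.sqrt q)⁻¹ + 1/2 * Real.sqrt q
      = 1/2 * (Real.sqrt q)⁻¹ * q⁻¹ * (1 - q)^2 := by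
    rw [hinv]; field_simp; ring
  have hC := congrArg (Complex.ofReal) hreal
  push_cast at hC
  have htr : e.trace = 2 + (((1 / 2) * (Real.sqrt q)⁻¹ * q⁻¹ * (1 - q) ^ 2 : ℝ) : ℂ) • x0 := by
    subst he
    rw [Matrix.trace]
    simp only [Matrix.diag, Fin.sum_univ_four, Matrix.smul_apply,
      Matrix.cons_val', Matrix.cons_val_zero, Matrix.cons_val_one, Matrix.head_cons,
      Matrix.empty_val', Matrix.cons_val_fin_one, Matrix.head_fin_const,
      Matrix.cons_val_two, Matrix.cons_val_three, Matrix.tail_cons]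
    push_cast
    exact stmt7_aux A x0 _ _ _ _ (by push_cast; linear_combination hC)
  refine ⟨htr, ?_⟩
  rw [htr]
  simp [hτ0, map_ofNat]
end

section
/- Let A be the algebra of S³_q with generators x₁, x₂ satisfying x₁x₂ = q x₂x₁, x₁*x₂ = q x₂x₁*, x₂*x₁ = q x₁x₂*, [x₁,x₁*] = 0, [x₂,x₂*] = (1-q⁻²)x₁x₁*, and x₂*x₂ + x₁*x₁ = 1. Then the 4×4 matrix e = (1/2)[[1, q⁻¹x₁, x₂, 0],[q⁻¹x₁*, 1, 0, x₂],[x₂*, 0, 1, -x₁],[0, x₂*, -x₁*, 1]] satisfies e² = e and e* = e. -/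
/-!
With `F = 2e - 1`, so that `e = ½ (1 + F)`, it suffices that `F` is self-adjoint and `F² = 1`.
Self-adjointness holds because `q` is real. The entries of `F² = 1` are exactly the defining
relations of `S³_q`, together with `x₂x₂* + q⁻²x₁x₁* = 1`, which follows from `[x₂, x₂*]` and the
radius relation.
-/

theorem isIdempotentElem_half_smul_one_add {𝕜 R : Type*} [Field 𝕜] [NeZero (2 : 𝕜)] [Ring R]
    [Algebra 𝕜 R] {u : R} (hu : u * u = 1) : IsIdempotentElem ((1 / 2 : 𝕜) • (1 + u)) := by
  have hsq : (1 + u) * (1 + u) = (2 : 𝕜) • (1 + u) := by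
    rw [two_smul]; noncomm_ring; rw [hu]; abel
  rw [IsIdempotentElem, smul_mul_smul_comm, hsq, smul_smul]
  congr 1
  field_simp

theorem IsSelfAdjoint.half_smul_one_add {𝕜 R : Type*} [Field 𝕜] [StarRing 𝕜] [Ring R]
    [StarRing R] [Algebra 𝕜 R] [StarModule 𝕜 R] {u : R} (hu : IsSelfAdjoint u) :
    IsSelfAdjoint ((1 / 2 : 𝕜) • (1 + u)) :=
  ((IsSelfAdjoint.one 𝕜).div (.ofNat 2)).smul ((IsSelfAdjoint.one R).add hu)

section QuantumSphere

variable {A : Type*} [Ring A] [StarRing A] [Algebra ℂ A]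

noncomputable def solitonInvolution (q : ℝ) (x1 x2 : A) : Matrix (Fin 4) (Fin 4) A :=
  !![0, ((q⁻¹ : ℝ) : ℂ) • x1, x2, 0;
     ((q⁻¹ : ℝ) : ℂ) • star x1, 0, 0, x2;
     star x2, 0, 0, -x1;
     0, star x2, -star x1, 0]

theorem isSelfAdjoint_solitonInvolution [StarModule ℂ A] (q : ℝ) (x1 x2 : A) :
    IsSelfAdjoint (solitonInvolution q x1 x2) := by
  ext i j
  fin_cases i <;> fin_cases j <;> simp [solitonInvolution, Matrix.star_apply, star_smul]

variable {q : ℝ} {x1 x2 : A}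

theorem mul_star_eq_one_sub_inv_sq_smul (hc1 : x1 * star x1 = star x1 * x1)
    (hc2 : x2 * star x2 - star x2 * x2 = ((1 - q⁻¹ ^ 2 : ℝ) : ℂ) • (x1 * star x1))
    (hrad : star x2 * x2 + star x1 * x1 = 1) :
    x2 * star x2 = 1 - ((q⁻¹ ^ 2 : ℝ) : ℂ) • (x1 * star x1) := by
  rw [sub_eq_iff_eq_add.mp hc2, eq_sub_of_add_eq hrad, ← hc1]
  push_cast
  module

theorem solitonInvolution_mul_self [StarModule ℂ A] (hq : q ≠ 0)
    (h12 : x1 * x2 = (q : ℂ) • (x2 * x1))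
    (h12s : star x1 * x2 = (q : ℂ) • (x2 * star x1))
    (h21s : star x2 * x1 = (q : ℂ) • (x1 * star x2))
    (hc1 : x1 * star x1 = star x1 * x1)
    (hc2 : x2 * star x2 - star x2 * x2 = ((1 - q⁻¹ ^ 2 : ℝ) : ℂ) • (x1 * star x1))
    (hrad : star x2 * x2 + star x1 * x1 = 1) :
    solitonInvolution q x1 x2 * solitonInvolution q x1 x2 = 1 := by
  have hq' : (q : ℂ) ≠ 0 := Complex.ofReal_ne_zero.mpr hq
  have h2s1s : star x2 * star x1 = (q : ℂ) • (star x1 * star x2) := by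
    simpa [star_smul] using congrArg star h12
  have h22s := mul_star_eq_one_sub_inv_sq_smul hc1 hc2 hrad
  have h2s2 : star x2 * x2 = 1 - star x1 * x1 := eq_sub_of_add_eq hrad
  ext i j
  fin_cases i <;> fin_cases j <;>
    simp [solitonInvolution, Matrix.mul_apply, Fin.sum_univ_four, smul_smul, h12, h12s, h21s,
      h2s1s, h22s, h2s2, hc1] <;>
    match_scalars <;> simp [field]

end QuantumSphere

/-- The soliton projection on the quantum Euclidean sphere S³_q
(radius normalized so that x₂*x₂ + x₁*x₁ = 1): the 4×4 matrix e is a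
self-adjoint idempotent. -/
theorem stmt9 (A : Type*) [Ring A] [StarRing A] [Algebra ℂ A] [StarModule ℂ A]
    (q : ℝ) (hq : 0 < q) (x1 x2 : A)
    (h12 : x1 * x2 = (q : ℂ) • (x2 * x1))
    (h12s : star x1 * x2 = (q : ℂ) • (x2 * star x1))
    (h21s : star x2 * x1 = (q : ℂ) • (x1 * star x2))
    (hc1 : x1 * star x1 = star x1 * x1)
    (hc2 : x2 * star x2 - star x2 * x2 = ((1 - q⁻¹ ^ 2 : ℝ) : ℂ) • (x1 * star x1))
    (hrad : star x2 * x2 + star x1 * x1 = 1) :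
    let e : Matrix (Fin 4) (Fin 4) A :=
      (1 / 2 : ℂ) •
        !![1, ((q⁻¹ : ℝ) : ℂ) • x1, x2, 0;
           ((q⁻¹ : ℝ) : ℂ) • star x1, 1, 0, x2;
           star x2, 0, 1, -x1;
           0, star x2, -star x1, 1]
    e * e = e ∧ star e = e := by
  intro e
  have he : e = (1 / 2 : ℂ) • (1 + solitonInvolution q x1 x2) := by
    dsimp only [e]
    congr 1
    ext i j
    fin_cases i <;> fin_cases j <;> simp [solitonInvolution]
  rw [he]
  exact ⟨isIdempotentElem_half_smul_one_add
      (solitonInvolution_mul_self hq.ne' h12 h12s h21s hc1 hc2 hrad),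
    (isSelfAdjoint_solitonInvolution q x1 x2).half_smul_one_add⟩
end

section
/- Let A be the algebra of S⁵_q with generators x₁, x₂, x₃ satisfying xᵢxⱼ = q xⱼxᵢ for i<j, xᵢ*xⱼ = q xⱼxᵢ* for i≠j, [x₁,x₁*] = 0, [x₂,x₂*] = (1-q⁻²)x₁x₁*, [x₃,x₃*] = (1-q⁻²)(x₂*x₂ + x₁*x₁), and x₃*x₃ + x₂*x₂ + x₁*x₁ = 1. Then the 8×8 matrix e₍₅₎ = (1/2)[[I₄ + q⁻¹u₍₃₎, x₃ I₄],[x₃* I₄, I₄ - u₍₃₎]], where u₍₃₎ = 2e₍₃₎ - 1 and e₍₃₎ is the S³_q projection built from x₁, x₂, satisfies e₍₅₎² = e₍₅₎ and e₍₅₎* = e₍₅₎. -/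
/-!
Write `u` for `u₍₃₎` and `X` for `x₃ I₄`. The relations of `S⁵_q` make `u` self-adjoint with
`u² = s I₄`, where `s = x₂*x₂ + x₁*x₁`; they make `X` `q`-commute with `u`
(`q⁻¹ u X = X u` and `q⁻¹ X* u = u X*`); and they give `X X* = 1 - q⁻² s`, `X* X = 1 - s`.
With these, each block of the square of `[[1 + q⁻¹ u, X], [X*, 1 - u]]` is twice the
corresponding block, e.g. `(1 + q⁻¹ u)² + X X* = 2 (1 + q⁻¹ u)` because the `q⁻² s` terms cancel.
-/

open Matrix

section Blocks

variable {K A n : Type*} [Field K] [CharZero K] [Ring A] [Algebra K A] [Fintype n]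
  [DecidableEq n]

theorem isIdempotentElem_half_smul_fromBlocks {c : K} {u x y s : Matrix n n A}
    (hu : u * u = s) (hxy : x * y = 1 - c ^ 2 • s) (hyx : y * x = 1 - s)
    (hux : c • (u * x) = x * u) (huy : c • (y * u) = u * y) :
    IsIdempotentElem ((1 / 2 : K) • fromBlocks (1 + c • u) x y (1 - u)) := by
  set P := fromBlocks (1 + c • u) x y (1 - u)
  have hP : P * P = (2 : K) • P := by
    rw [fromBlocks_multiply, fromBlocks_smul]
    congr 1
    · simp only [mul_add, add_mul, one_mul, mul_one, smul_mul_assoc, mul_smul_comm, hu, hxy]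
      module
    · simp only [add_mul, mul_sub, one_mul, mul_one, smul_mul_assoc, hux]
      module
    · simp only [mul_add, sub_mul, one_mul, mul_one, mul_smul_comm, huy]
      module
    · simp only [mul_sub, sub_mul, one_mul, mul_one, hu, hyx]
      module
  rw [IsIdempotentElem, smul_mul_smul_comm, hP, smul_smul]
  norm_num

end Blocks

section QSphere

variable {A : Type*} [Ring A] [StarRing A] [Algebra ℂ A] {q : ℝ} {x1 x2 : A}

variable (q x1 x2) in
noncomputable def qSphereU : Matrix (Fin 4) (Fin 4) A :=
  !![0, ((q⁻¹ : ℝ) : ℂ) • x1, x2, 0;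
     ((q⁻¹ : ℝ) : ℂ) • star x1, 0, 0, x2;
     star x2, 0, 0, -x1;
     0, star x2, -star x1, 0]

variable (q x1 x2) in
theorem two_smul_half_smul_sub_one_eq_qSphereU :
    (2 : ℂ) • ((1 / 2 : ℂ) •
        !![1, ((q⁻¹ : ℝ) : ℂ) • x1, x2, 0;
           ((q⁻¹ : ℝ) : ℂ) • star x1, 1, 0, x2;
           star x2, 0, 1, -x1;
           0, star x2, -star x1, 1]) - 1 = qSphereU q x1 x2 := by
  rw [smul_smul]
  norm_num
  ext i j
  fin_cases i <;> fin_cases j <;> simp [qSphereU, one_apply]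

variable (q x1 x2) in
theorem qSphereU_isHermitian [StarModule ℂ A] : (qSphereU q x1 x2).IsHermitian := by
  ext i j
  fin_cases i <;> fin_cases j <;> simp [qSphereU, star_smul]

theorem qSphereU_mul_self [StarModule ℂ A] (hq : q ≠ 0)
    (h12 : x1 * x2 = (q : ℂ) • (x2 * x1)) (h12s : star x1 * x2 = (q : ℂ) • (x2 * star x1))
    (hc1 : x1 * star x1 = star x1 * x1)
    (hc2 : x2 * star x2 - star x2 * x2 = ((1 - q⁻¹ ^ 2 : ℝ) : ℂ) • (x1 * star x1)) :
    qSphereU q x1 x2 * qSphereU q x1 x2 = diagonal fun _ => star x2 * x2 + star x1 * x1 := by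
  have h21s : star x2 * x1 = (q : ℂ) • (x1 * star x2) := by
    simpa [star_smul] using congrArg star h12s
  have h21ss : star x2 * star x1 = (q : ℂ) • (star x1 * star x2) := by
    simpa [star_smul] using congrArg star h12
  have hx2 : x2 * star x2 = star x2 * x2 + ((1 - q⁻¹ ^ 2 : ℝ) : ℂ) • (x1 * star x1) :=
    eq_add_of_sub_eq' hc2
  have hqC : (q : ℂ) ≠ 0 := by exact_mod_cast hq
  ext i j
  fin_cases i <;> fin_cases j <;>
    simp [qSphereU, mul_apply, Fin.sum_univ_four, h12, h12s, h21s, h21ss, hx2, hc1, smul_smul,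
      -Complex.coe_smul] <;>
    match_scalars <;> field_simp <;> ring

theorem inv_smul_qSphereU_mul_diagonal (hq : q ≠ 0) {x : A}
    (h1 : x1 * x = (q : ℂ) • (x * x1)) (h2 : x2 * x = (q : ℂ) • (x * x2))
    (h1s : star x1 * x = (q : ℂ) • (x * star x1))
    (h2s : star x2 * x = (q : ℂ) • (x * star x2)) :
    ((q⁻¹ : ℝ) : ℂ) • (qSphereU q x1 x2 * diagonal fun _ => x)
      = (diagonal fun _ => x) * qSphereU q x1 x2 := by
  have hqC : (q : ℂ) ≠ 0 := by exact_mod_cast hq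
  ext i j
  fin_cases i <;> fin_cases j <;>
    simp [qSphereU, h1, h2, h1s, h2s, smul_smul, -Complex.coe_smul] <;>
    match_scalars <;> field_simp

theorem inv_smul_diagonal_star_mul_qSphereU [StarModule ℂ A] (hq : q ≠ 0) {x : A}
    (h1 : x1 * x = (q : ℂ) • (x * x1)) (h2 : x2 * x = (q : ℂ) • (x * x2))
    (h1s : star x1 * x = (q : ℂ) • (x * star x1))
    (h2s : star x2 * x = (q : ℂ) • (x * star x2)) :
    ((q⁻¹ : ℝ) : ℂ) • ((diagonal fun _ => star x) * qSphereU q x1 x2)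
      = qSphereU q x1 x2 * diagonal fun _ => star x := by
  have h := congrArg conjTranspose (inv_smul_qSphereU_mul_diagonal hq h1 h2 h1s h2s)
  rwa [conjTranspose_smul, conjTranspose_mul, conjTranspose_mul, diagonal_conjTranspose,
    (qSphereU_isHermitian q x1 x2).eq, Complex.star_def, Complex.conj_ofReal] at h

end QSphere

theorem stmt12_general (A : Type*) [Ring A] [StarRing A] [Algebra ℂ A] [StarModule ℂ A]
    (q : ℝ) (hq : 0 < q) (x1 x2 x3 : A)
    (h12 : x1 * x2 = (q : ℂ) • (x2 * x1))
    (h13 : x1 * x3 = (q : ℂ) • (x3 * x1))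
    (h23 : x2 * x3 = (q : ℂ) • (x3 * x2))
    (h12s : star x1 * x2 = (q : ℂ) • (x2 * star x1))
    (h13s : star x1 * x3 = (q : ℂ) • (x3 * star x1))
    (h23s : star x2 * x3 = (q : ℂ) • (x3 * star x2))
    (hc1 : x1 * star x1 = star x1 * x1)
    (hc2 : x2 * star x2 - star x2 * x2 = ((1 - q⁻¹ ^ 2 : ℝ) : ℂ) • (x1 * star x1))
    (hc3 : x3 * star x3 - star x3 * x3
      = ((1 - q⁻¹ ^ 2 : ℝ) : ℂ) • (star x2 * x2 + star x1 * x1))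
    (hrad : star x3 * x3 + star x2 * x2 + star x1 * x1 = 1) :
    let e3 : Matrix (Fin 4) (Fin 4) A :=
      (1 / 2 : ℂ) •
        !![1, ((q⁻¹ : ℝ) : ℂ) • x1, x2, 0;
           ((q⁻¹ : ℝ) : ℂ) • star x1, 1, 0, x2;
           star x2, 0, 1, -x1;
           0, star x2, -star x1, 1]
    let u3 : Matrix (Fin 4) (Fin 4) A := (2 : ℂ) • e3 - 1
    let e5 : Matrix (Fin 4 ⊕ Fin 4) (Fin 4 ⊕ Fin 4) A :=
      (1 / 2 : ℂ) •
        Matrix.fromBlocks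
          (1 + ((q⁻¹ : ℝ) : ℂ) • u3)
          (Matrix.diagonal fun _ => x3)
          (Matrix.diagonal fun _ => star x3)
          (1 - u3)
    e5 * e5 = e5 ∧ star e5 = e5 := by
  intro e3 u3 e5
  have hq0 : q ≠ 0 := hq.ne'
  have hu : u3 = qSphereU q x1 x2 := two_smul_half_smul_sub_one_eq_qSphereU q x1 x2
  have hc : IsSelfAdjoint ((q⁻¹ : ℝ) : ℂ) := Complex.conj_ofReal _
  have hx3x3 : star x3 * x3 = 1 - (star x2 * x2 + star x1 * x1) := by
    rw [← hrad]; abel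
  have hx3x3' :
      x3 * star x3 = 1 - ((q⁻¹ : ℝ) : ℂ) ^ 2 • (star x2 * x2 + star x1 * x1) := by
    rw [eq_add_of_sub_eq' hc3, hx3x3]; push_cast; module
  constructor
  · refine isIdempotentElem_half_smul_fromBlocks
      (s := diagonal fun _ => star x2 * x2 + star x1 * x1) ?_ ?_ ?_ ?_ ?_
    · rw [hu]; exact qSphereU_mul_self hq0 h12 h12s hc1 hc2
    · rw [diagonal_mul_diagonal, hx3x3', ← diagonal_one, ← diagonal_smul, diagonal_sub]; rfl
    · rw [diagonal_mul_diagonal, hx3x3, ← diagonal_one, diagonal_sub]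
    · rw [hu]; exact inv_smul_qSphereU_mul_diagonal hq0 h13 h23 h13s h23s
    · rw [hu]; exact inv_smul_diagonal_star_mul_qSphereU hq0 h13 h23 h13s h23s
  · have hu3 : u3.IsHermitian := hu ▸ qSphereU_isHermitian q x1 x2
    refine IsSelfAdjoint.smul (by simp [isSelfAdjoint_iff]) ?_
    exact ((isHermitian_one.add (hu3.smul hc)).fromBlocks (diagonal_conjTranspose _)
      (isHermitian_one.sub hu3)).isSelfAdjoint

/-- The soliton projection on S⁵_q (radius normalized so that
x₃*x₃ + x₂*x₂ + x₁*x₁ = 1): the 8×8 block matrix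
e₍₅₎ = (1/2)[[I₄ + q⁻¹u₍₃₎, x₃ I₄],[x₃* I₄, I₄ - u₍₃₎]], with u₍₃₎ = 2e₍₃₎ - 1
and e₍₃₎ the S³_q projection built from x₁, x₂, is a self-adjoint idempotent. -/
theorem stmt12 (A : Type*) [Ring A] [StarRing A] [Algebra ℂ A] [StarModule ℂ A]
    (q : ℝ) (hq : 0 < q) (x1 x2 x3 : A)
    (h12 : x1 * x2 = (q : ℂ) • (x2 * x1))
    (h13 : x1 * x3 = (q : ℂ) • (x3 * x1))
    (h23 : x2 * x3 = (q : ℂ) • (x3 * x2))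
    (h12s : star x1 * x2 = (q : ℂ) • (x2 * star x1))
    (h21s : star x2 * x1 = (q : ℂ) • (x1 * star x2))
    (h13s : star x1 * x3 = (q : ℂ) • (x3 * star x1))
    (h31s : star x3 * x1 = (q : ℂ) • (x1 * star x3))
    (h23s : star x2 * x3 = (q : ℂ) • (x3 * star x2))
    (h32s : star x3 * x2 = (q : ℂ) • (x2 * star x3))
    (hc1 : x1 * star x1 = star x1 * x1)
    (hc2 : x2 * star x2 - star x2 * x2 = ((1 - q⁻¹ ^ 2 : ℝ) : ℂ) • (x1 * star x1))
    (hc3 : x3 * star x3 - star x3 * x3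
      = ((1 - q⁻¹ ^ 2 : ℝ) : ℂ) • (star x2 * x2 + star x1 * x1))
    (hrad : star x3 * x3 + star x2 * x2 + star x1 * x1 = 1) :
    let e3 : Matrix (Fin 4) (Fin 4) A :=
      (1 / 2 : ℂ) •
        !![1, ((q⁻¹ : ℝ) : ℂ) • x1, x2, 0;
           ((q⁻¹ : ℝ) : ℂ) • star x1, 1, 0, x2;
           star x2, 0, 1, -x1;
           0, star x2, -star x1, 1]
    let u3 : Matrix (Fin 4) (Fin 4) A := (2 : ℂ) • e3 - 1
    let e5 : Matrix (Fin 4 ⊕ Fin 4) (Fin 4 ⊕ Fin 4) A :=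
      (1 / 2 : ℂ) •
        Matrix.fromBlocks
          (1 + ((q⁻¹ : ℝ) : ℂ) • u3)
          (Matrix.diagonal fun _ => x3)
          (Matrix.diagonal fun _ => star x3)
          (1 - u3)
    e5 * e5 = e5 ∧ star e5 = e5 :=
  stmt12_general A q hq x1 x2 x3 h12 h13 h23 h12s h13s h23s hc1 hc2 hc3 hrad
end
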